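/- arXiv:0912.0970 — 2 statements merged into one kernel-verified Lean document; each statement's English description precedes it below -/
import Mathlib

section
/- Let P and S be prefix-closed languages over Σ and Σuc ⊆ Σ, and suppose the equation P ∩ X = S has a prefix-closed solution under partial controllability. Then for every prefix-closed language C: C is a solution under partial controllability (P ∩ C = S and P ∩ Ext(C) = S) if and only if S ⊆ C ⊆ (compl(P) ∪ S)^pref. -/
/-!
Supervisory control via language equation solving: common definitions.
A language over alphabet `α` is a set of finite words `Set (List α)`.
-/

variable {α : Type*}

/-- Prefix closure of a language: `Init(L) = {u | ∃ v, u ++ v ∈ L}`. -/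
def InitL (L : Set (List α)) : Set (List α) := {u | ∃ v, u ++ v ∈ L}

/-- A language is prefix-closed if it contains its prefix closure. -/
def IsPrefixClosed (L : Set (List α)) : Prop := InitL L ⊆ L

/-- `M^pref`: the largest prefix-closed sublanguage of `M`. -/
def prefCl (M : Set (List α)) : Set (List α) := {w | w ∈ M ∧ ∀ p : List α, p <+: w → p ∈ M}

/-- The partial trace map `tr_L` for the `Σuc`-extension, as a graph relation:
`Tr L Suc w t` means `tr_L(w)` is defined and equals `t`. -/
inductive Tr (L : Set (List α)) (Suc : Set α) : List α → List α → Prop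
  | nil : Tr L Suc [] []
  | keep {p t : List α} {a : α} : Tr L Suc p t → t ++ [a] ∈ L → Tr L Suc (p ++ [a]) (t ++ [a])
  | drop {p t : List α} {a : α} : Tr L Suc p t → t ++ [a] ∉ L → a ∈ Suc → Tr L Suc (p ++ [a]) t

/-- `Σuc`-extension of a language: `Ext(L) = {w | tr_L(w) is defined}`. -/
def ExtL (L : Set (List α)) (Suc : Set α) : Set (List α) := {w | ∃ t, Tr L Suc w t}

open Classical in
/-- `π`: erase all letters of `Suo` from a word. -/
noncomputable def proj (Suo : Set α) : List α → List α
  | [] => []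
  | a :: w => if a ∈ Suo then proj Suo w else a :: proj Suo w

/-- `Σuo`-folding of a language. -/
def Fold (Suo : Set α) (L : Set (List α)) : Set (List α) :=
  {w | proj Suo w ∈ L ∧ ∀ (p : List α) (a : α), p ++ [a] <+: w → a ∈ Suo → proj Suo p ++ [a] ∈ L}

/-- `Real(L)` for a nonempty prefix-closed language `L`. -/
def RealL (Suo : Set α) (L : Set (List α)) : Set (List α) :=
  {w | ∀ (p q : List α) (a : α), w = p ++ [a] ++ q →
    ∃ u : List α, proj Suo u = proj Suo p ∧ u ++ [a] ∈ L}

/-- Concatenation of languages. -/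
def conc (L M : Set (List α)) : Set (List α) := {w | ∃ u ∈ L, ∃ v ∈ M, w = u ++ v}

/-- `A*`: all words whose letters all lie in the subalphabet `A`. -/
def ucStar (A : Set α) : Set (List α) := {w | ∀ a ∈ w, a ∈ A}

lemma tr_self {C : Set (List α)} {Suc : Set α} (hC : IsPrefixClosed C) :
    ∀ {w : List α}, w ∈ C → Tr C Suc w w := by
  intro w
  induction w using List.reverseRecOn with
  | nil => intro _; exact Tr.nil
  | append_singleton p a ih =>
    intro h
    exact Tr.keep (ih (hC ⟨[a], h⟩)) h

lemma tr_mem {P S C : Set (List α)} {Suc : Set α}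
    (hP : IsPrefixClosed P)
    (hPC : P ∩ C = S) (hSC : S ⊆ C)
    (hctrl : ∀ s ∈ S, ∀ a ∈ Suc, s ++ [a] ∈ P → s ++ [a] ∈ S)
    (hnil : ([] : List α) ∈ P → [] ∈ S) :
    ∀ {w t : List α}, Tr C Suc w t → w ∈ P → w ∈ S ∧ t = w := by
  intro w t h
  induction h with
  | nil => intro h; exact ⟨hnil h, rfl⟩
  | @keep p t a hpt htC ih =>
    intro hw
    obtain ⟨hpS, rfl⟩ := ih (hP ⟨[a], hw⟩)
    exact ⟨hPC ▸ (⟨hw, htC⟩ : _ ∈ P ∩ C), rfl⟩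
  | @drop p t a hpt htC ha ih =>
    intro hw
    obtain ⟨hpS, rfl⟩ := ih (hP ⟨[a], hw⟩)
    exact absurd (hSC (hctrl _ hpS _ ha hw)) htC

/-- For prefix-closed `P` and `S`, solutions under partial controllability are exactly the
prefix-closed languages between `S` and `(compl(P) ∪ S)^pref`. -/
theorem partialControllability_characterization (P S : Set (List α)) (Suc : Set α)
    (hP : IsPrefixClosed P) (hS : IsPrefixClosed S)
    (hsolv : ∃ C : Set (List α), IsPrefixClosed C ∧ P ∩ C = S ∧ P ∩ ExtL C Suc = S)
    (C : Set (List α)) (hC : IsPrefixClosed C) :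
    (P ∩ C = S ∧ P ∩ ExtL C Suc = S) ↔ S ⊆ C ∧ C ⊆ prefCl (Pᶜ ∪ S) := by
  obtain ⟨C₀, hC₀, hPC₀, hPE₀⟩ := hsolv
  have hSC₀ : S ⊆ C₀ := hPC₀ ▸ Set.inter_subset_right
  have hSP : S ⊆ P := hPC₀ ▸ Set.inter_subset_left
  have hnil : ([] : List α) ∈ P → [] ∈ S := fun h =>
    hPE₀ ▸ (⟨h, [], Tr.nil⟩ : _ ∈ P ∩ ExtL C₀ Suc)
  have hctrl : ∀ s ∈ S, ∀ a ∈ Suc, s ++ [a] ∈ P → s ++ [a] ∈ S := by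
    intro s hs a ha hsa
    have htr : Tr C₀ Suc s s := tr_self hC₀ (hSC₀ hs)
    have : s ++ [a] ∈ ExtL C₀ Suc := by
      by_cases hc : s ++ [a] ∈ C₀
      · exact ⟨s ++ [a], Tr.keep htr hc⟩
      · exact ⟨s, Tr.drop htr hc ha⟩
    exact hPE₀ ▸ (⟨hsa, this⟩ : _ ∈ P ∩ ExtL C₀ Suc)
  constructor
  · rintro ⟨h1, _⟩
    have hSC : S ⊆ C := h1 ▸ Set.inter_subset_right
    refine ⟨hSC, fun w hw => ⟨?_, fun p hp => ?_⟩⟩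
    · by_cases hwP : w ∈ P
      · exact Or.inr (h1 ▸ (⟨hwP, hw⟩ : _ ∈ P ∩ C))
      · exact Or.inl hwP
    · obtain ⟨v, rfl⟩ := hp
      have hpC : p ∈ C := hC ⟨v, hw⟩
      by_cases hpP : p ∈ P
      · exact Or.inr (h1 ▸ (⟨hpP, hpC⟩ : _ ∈ P ∩ C))
      · exact Or.inl hpP
  · rintro ⟨hSC, hCpref⟩
    have h1 : P ∩ C = S := by
      apply Set.eq_of_subset_of_subset
      · rintro w ⟨hwP, hwC⟩
        rcases (hCpref hwC).1 with h | h
        · exact absurd hwP h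
        · exact h
      · exact fun s hs => ⟨hSP hs, hSC hs⟩
    refine ⟨h1, Set.eq_of_subset_of_subset ?_ ?_⟩
    · rintro w ⟨hwP, t, htr⟩
      exact (tr_mem hP h1 hSC hctrl hnil htr hwP).1
    · exact fun s hs => ⟨hSP hs, s, tr_self hC (hSC hs)⟩
end

section
/- Let P and S be languages over Σ with S nonempty, let Σuo ⊆ Σuc ⊆ Σ, and suppose the equation P ∩ X = S has a prefix-closed solution. Let Z = Init(S) · Σuc*, where Σuc* is the language of all words whose letters all lie in Σuc and · is concatenation of languages (Z is nonempty and prefix-closed). Then the equation has a prefix-closed solution under partial controllability and observability (a prefix-closed C with P ∩ C = S and P ∩ Ext(Fold(C)) = S) if and only if Real(Z) ⊆ compl(P) ∪ S. -/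
/-!
Supervisory control via language equation solving: common definitions.
A language over alphabet `α` is a set of finite words `Set (List α)`.
-/

variable {α : Type*}

/-!
If `Σuo ⊆ Σuc`, the language `R = Real(Z)` is prefix-closed, closed under appending
uncontrollable letters, and contains a word exactly when it contains its projection `π`.
Hence `Fold R = R` and `Ext R = R`, so `R` is a solution under partial controllability and
observability as soon as `P ∩ R = S`, which is the condition `Real(Z) ⊆ compl(P) ∪ S`.

Conversely, whether a word lies in `Ext (Fold C)` is decided at its letters outside `Σuc`,
each through the projection of the prefix before it (the trace of `Fold C` projects to a greedy
run of `C` on the projected word). A word of `Real(Z)` reaches each such letter with the same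
projection as some word of `Init(S) ⊆ Ext (Fold C)`, so `Real(Z) ⊆ Ext (Fold C)`, and then
`P ∩ Real(Z) ⊆ P ∩ Ext (Fold C) = S`.
-/

section Projection
open Classical
variable {Suo : Set α}

theorem proj_eq_filter (w : List α) : proj Suo w = w.filter (fun a => a ∉ Suo) := by
  induction w with
  | nil => rfl
  | cons a w ih => by_cases ha : a ∈ Suo <;> simp [proj, ha, ih]

theorem proj_append (u v : List α) : proj Suo (u ++ v) = proj Suo u ++ proj Suo v := by
  simp only [proj_eq_filter, List.filter_append]

theorem proj_append_singleton_of_mem {a : α} (ha : a ∈ Suo) (w : List α) :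
    proj Suo (w ++ [a]) = proj Suo w := by
  simp [proj_eq_filter, ha]

theorem proj_append_singleton_of_not_mem {a : α} (ha : a ∉ Suo) (w : List α) :
    proj Suo (w ++ [a]) = proj Suo w ++ [a] := by
  simp [proj_eq_filter, ha]

theorem proj_proj (w : List α) : proj Suo (proj Suo w) = proj Suo w := by
  simp only [proj_eq_filter, List.filter_filter, Bool.and_self]

theorem exists_eq_append_of_proj_eq {w p q : List α} {a : α} (h : proj Suo w = p ++ [a] ++ q) :
    ∃ p' q', w = p' ++ [a] ++ q' ∧ proj Suo p' = p := by
  rw [proj_eq_filter, List.append_assoc, List.singleton_append, List.filter_eq_append_iff] at h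
  obtain ⟨w₁, w₂, rfl, hw₁, hw₂⟩ := h
  obtain ⟨l₁, l₂, rfl, hl₁, -, -⟩ := List.filter_eq_cons_iff.mp hw₂
  refine ⟨w₁ ++ l₁, l₂, by simp, ?_⟩
  rw [proj_eq_filter, List.filter_append, hw₁, List.filter_eq_nil_iff.mpr hl₁, List.append_nil]

end Projection

theorem eq_of_append_singleton_eq {u v : List α} {a b : α} (h : u ++ [a] = v ++ [b]) :
    u = v ∧ a = b := by
  simpa using List.append_inj' h rfl

theorem prefix_append_singleton_iff {q w : List α} {a b : α} :
    q ++ [b] <+: w ++ [a] ↔ q ++ [b] <+: w ∨ q = w ∧ b = a := by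
  rw [List.prefix_concat_iff, or_comm]
  simp

theorem IsPrefixClosed.mem_of_prefix {L : Set (List α)} (hL : IsPrefixClosed L) {u w : List α}
    (h : u <+: w) (hw : w ∈ L) : u ∈ L := by
  obtain ⟨r, rfl⟩ := h
  exact hL ⟨r, hw⟩

section Extension
variable {Suc : Set α}

/-- The trace map of such a language never drops a letter. -/
theorem extL_eq_self {M : Set (List α)} (hM : IsPrefixClosed M) (hnil : [] ∈ M)
    (hSuc : ∀ u ∈ M, ∀ a ∈ Suc, u ++ [a] ∈ M) : ExtL M Suc = M := by
  have trace_eq : ∀ {w t}, Tr M Suc w t → t = w ∧ w ∈ M := by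
    intro w t h
    induction h with
    | nil => exact ⟨rfl, hnil⟩
    | keep _ hmem ih => exact ⟨by rw [ih.1], ih.1 ▸ hmem⟩
    | drop _ hmem ha ih => exact absurd (hSuc _ (ih.1 ▸ ih.2) _ ha) hmem
  refine Set.Subset.antisymm (fun w ⟨t, h⟩ => (trace_eq h).2) fun w hw => ⟨w, ?_⟩
  induction w using List.reverseRecOn with
  | nil => exact Tr.nil
  | append_singleton w a ih => exact (ih (hM ⟨[a], hw⟩)).keep hw

end Extension

section Folding
open Classical
variable {Suc Suo : Set α} {C : Set (List α)}

noncomputable def greedy (C : Set (List α)) (v : List α) : List α :=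
  v.foldl (fun t a => if t ++ [a] ∈ C then t ++ [a] else t) []

theorem greedy_append_singleton (v : List α) (a : α) :
    greedy C (v ++ [a]) = if greedy C v ++ [a] ∈ C then greedy C v ++ [a] else greedy C v :=
  List.foldl_concat _ _ _ _

theorem nil_mem_fold (hnil : [] ∈ C) : [] ∈ Fold Suo C :=
  ⟨hnil, fun p a h _ => absurd h.length_le (by simp)⟩

theorem append_singleton_mem_fold_iff {t : List α} {a : α} (ht : t ∈ Fold Suo C) :
    t ++ [a] ∈ Fold Suo C ↔ proj Suo t ++ [a] ∈ C := by
  refine ⟨fun h => ?_, fun h => ⟨?_, fun p b hp hb => ?_⟩⟩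
  · by_cases ha : a ∈ Suo
    · exact h.2 t a (List.prefix_refl _) ha
    · exact proj_append_singleton_of_not_mem ha t ▸ h.1
  · by_cases ha : a ∈ Suo
    · exact (proj_append_singleton_of_mem ha t).symm ▸ ht.1
    · exact (proj_append_singleton_of_not_mem ha t).symm ▸ h
  · rcases List.prefix_concat_iff.mp hp with hp | hp
    · obtain ⟨rfl, rfl⟩ := eq_of_append_singleton_eq hp
      exact h
    · exact ht.2 p b hp hb

theorem Tr.mem_fold_and_proj_eq (hnil : [] ∈ C) {w t : List α}
    (h : Tr (Fold Suo C) Suc w t) :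
    t ∈ Fold Suo C ∧ proj Suo t = greedy C (proj Suo w) := by
  induction h with
  | nil => exact ⟨nil_mem_fold hnil, rfl⟩
  | @keep p t a _ hmem ih =>
    refine ⟨hmem, ?_⟩
    by_cases ha : a ∈ Suo
    · simp only [proj_append_singleton_of_mem ha, ih.2]
    · rw [proj_append_singleton_of_not_mem ha, proj_append_singleton_of_not_mem ha,
        greedy_append_singleton, ← ih.2, if_pos ((append_singleton_mem_fold_iff ih.1).mp hmem)]
  | @drop p t a _ hmem _ ih =>
    refine ⟨ih.1, ?_⟩
    by_cases ha : a ∈ Suo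
    · rw [proj_append_singleton_of_mem ha, ih.2]
    · rw [proj_append_singleton_of_not_mem ha, greedy_append_singleton, ← ih.2,
        if_neg (mt (append_singleton_mem_fold_iff ih.1).mpr hmem)]

theorem Tr.inv_append_singleton {L : Set (List α)} {w t : List α} {a : α}
    (h : Tr L Suc (w ++ [a]) t) :
    ∃ s, Tr L Suc w s ∧
      (t = s ++ [a] ∧ s ++ [a] ∈ L ∨ t = s ∧ s ++ [a] ∉ L ∧ a ∈ Suc) := by
  generalize hw : w ++ [a] = w' at h
  cases h with
  | nil => simp at hw
  | keep h hmem =>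
    obtain ⟨rfl, rfl⟩ := eq_of_append_singleton_eq hw
    exact ⟨_, h, Or.inl ⟨rfl, hmem⟩⟩
  | drop h hmem ha =>
    obtain ⟨rfl, rfl⟩ := eq_of_append_singleton_eq hw
    exact ⟨_, h, Or.inr ⟨rfl, hmem, ha⟩⟩

theorem append_singleton_mem_extL_fold_iff (hnil : [] ∈ C) {w : List α} {a : α} :
    w ++ [a] ∈ ExtL (Fold Suo C) Suc ↔
      w ∈ ExtL (Fold Suo C) Suc ∧ (a ∉ Suc → greedy C (proj Suo w) ++ [a] ∈ C) := by
  constructor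
  · rintro ⟨t, h⟩
    obtain ⟨s, hs, hstep⟩ := h.inv_append_singleton
    obtain ⟨hsC, hsproj⟩ := hs.mem_fold_and_proj_eq hnil
    refine ⟨⟨s, hs⟩, fun ha => ?_⟩
    rcases hstep with ⟨-, hmem⟩ | ⟨-, -, ha'⟩
    · exact hsproj ▸ (append_singleton_mem_fold_iff hsC).mp hmem
    · exact absurd ha' ha
  · rintro ⟨⟨t, h⟩, hstep⟩
    obtain ⟨htC, htproj⟩ := h.mem_fold_and_proj_eq hnil
    by_cases hmem : t ++ [a] ∈ Fold Suo C
    · exact ⟨_, h.keep hmem⟩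
    · refine ⟨_, h.drop hmem (not_not.mp fun ha => hmem ?_)⟩
      exact (append_singleton_mem_fold_iff htC).mpr (htproj ▸ hstep ha)

theorem mem_extL_fold_iff (hnil : [] ∈ C) {w : List α} :
    w ∈ ExtL (Fold Suo C) Suc ↔
      ∀ q a, q ++ [a] <+: w → a ∉ Suc → greedy C (proj Suo q) ++ [a] ∈ C := by
  induction w using List.reverseRecOn with
  | nil => exact iff_of_true ⟨[], Tr.nil⟩ fun q a h => absurd h.length_le (by simp)
  | append_singleton w a ih =>
    simp only [append_singleton_mem_extL_fold_iff hnil, ih, prefix_append_singleton_iff]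
    constructor
    · rintro ⟨hw, ha⟩ q b (hq | ⟨rfl, rfl⟩)
      exacts [hw q b hq, ha]
    · intro h
      exact ⟨fun q b hq => h q b (Or.inl hq), h w a (Or.inr ⟨rfl, rfl⟩)⟩

end Folding

section Realization
variable {Suc Suo : Set α} {L : Set (List α)}

theorem isPrefixClosed_realL : IsPrefixClosed (RealL Suo L) := by
  rintro w ⟨v, hv⟩ p q a rfl
  exact hv p (q ++ v) a (by simp)

theorem nil_mem_realL : [] ∈ RealL Suo L :=
  fun p q a h => absurd (congrArg List.length h) (by simp)

theorem subset_realL (hL : IsPrefixClosed L) : L ⊆ RealL Suo L := by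
  rintro w hw p q a rfl
  exact ⟨p, rfl, hL ⟨q, hw⟩⟩

theorem proj_mem_realL {w : List α} (hw : w ∈ RealL Suo L) : proj Suo w ∈ RealL Suo L := by
  intro p q a hfact
  obtain ⟨p', q', rfl, rfl⟩ := exists_eq_append_of_proj_eq hfact
  obtain ⟨u, hu, huL⟩ := hw p' q' a rfl
  exact ⟨u, by rw [hu, proj_proj], huL⟩

theorem exists_mem_proj_eq_of_mem_realL (hL : IsPrefixClosed L) (hnil : [] ∈ L) {w : List α}
    (hw : w ∈ RealL Suo L) : ∃ u ∈ L, proj Suo u = proj Suo w := by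
  rcases List.eq_nil_or_concat w with rfl | ⟨v, a, rfl⟩
  · exact ⟨[], hnil, rfl⟩
  · obtain ⟨u, hu, huL⟩ := hw v [] a (by simp)
    by_cases ha : a ∈ Suo
    · exact ⟨u, hL ⟨[a], huL⟩, by simp [hu, proj_append_singleton_of_mem ha]⟩
    · exact ⟨u ++ [a], huL, by simp [hu, proj_append_singleton_of_not_mem ha]⟩

variable (hL : IsPrefixClosed L) (hnil : [] ∈ L)
  (hSuc : ∀ u ∈ L, ∀ a ∈ Suc, u ++ [a] ∈ L)
include hL hnil hSuc

theorem append_singleton_mem_realL {w : List α} {a : α} (hw : w ∈ RealL Suo L)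
    (ha : a ∈ Suc) :
    w ++ [a] ∈ RealL Suo L := by
  intro p q b hfact
  rcases List.eq_nil_or_concat q with rfl | ⟨q', c, rfl⟩
  · obtain ⟨rfl, rfl⟩ := eq_of_append_singleton_eq (by simpa using hfact)
    obtain ⟨u, huL, hu⟩ := exists_mem_proj_eq_of_mem_realL hL hnil hw
    exact ⟨u, hu, hSuc u huL a ha⟩
  · obtain ⟨rfl, rfl⟩ :=
      eq_of_append_singleton_eq (u := w) (v := p ++ [b] ++ q') (by simpa using hfact)
    exact hw p q' b rfl

/-- An unobservable letter is uncontrollable, so it can always be appended to a word of `L`. -/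
theorem mem_realL_of_proj_mem (hsub : Suo ⊆ Suc) {w : List α}
    (hw : proj Suo w ∈ RealL Suo L) : w ∈ RealL Suo L := by
  rintro p q a rfl
  by_cases ha : a ∈ Suo
  · rw [proj_append, proj_append_singleton_of_mem ha] at hw
    obtain ⟨u, huL, hu⟩ :=
      exists_mem_proj_eq_of_mem_realL hL hnil (isPrefixClosed_realL ⟨_, hw⟩)
    exact ⟨u, hu.trans (proj_proj p), hSuc u huL a (hsub ha)⟩
  · rw [proj_append, proj_append_singleton_of_not_mem ha] at hw
    obtain ⟨u, hu, huL⟩ := hw (proj Suo p) (proj Suo q) a rfl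
    exact ⟨u, hu.trans (proj_proj p), huL⟩

theorem fold_realL (hsub : Suo ⊆ Suc) : Fold Suo (RealL Suo L) = RealL Suo L := by
  refine Set.Subset.antisymm (fun w hw => mem_realL_of_proj_mem hL hnil hSuc hsub hw.1)
    fun w hw => ⟨proj_mem_realL hw, fun p a hp ha => ?_⟩
  apply mem_realL_of_proj_mem hL hnil hSuc hsub
  rw [proj_append_singleton_of_mem ha, proj_proj]
  exact proj_mem_realL
    (isPrefixClosed_realL.mem_of_prefix ((List.prefix_append p [a]).trans hp) hw)

theorem extL_fold_realL (hsub : Suo ⊆ Suc) :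
    ExtL (Fold Suo (RealL Suo L)) Suc = RealL Suo L := by
  rw [fold_realL hL hnil hSuc hsub]
  exact extL_eq_self isPrefixClosed_realL nil_mem_realL
    fun w hw a ha => append_singleton_mem_realL hL hnil hSuc hw ha

end Realization

theorem isPrefixClosed_extL_fold {Suc Suo : Set α} {C : Set (List α)} (hnil : [] ∈ C) :
    IsPrefixClosed (ExtL (Fold Suo C) Suc) := by
  rintro u ⟨v, huv⟩
  rw [mem_extL_fold_iff hnil] at huv ⊢
  exact fun q a hq => huv q a (hq.trans (List.prefix_append u v))

theorem realL_subset_extL_fold {Suc Suo : Set α} {L C : Set (List α)} (hnil : [] ∈ C)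
    (hL : ∀ u a, u ++ [a] ∈ L → a ∉ Suc → u ++ [a] ∈ ExtL (Fold Suo C) Suc) :
    RealL Suo L ⊆ ExtL (Fold Suo C) Suc := by
  intro w hw
  rw [mem_extL_fold_iff hnil]
  rintro q a ⟨r, rfl⟩ ha
  obtain ⟨u, hu, huL⟩ := hw q r a rfl
  have huE := (mem_extL_fold_iff hnil).mp (hL u a huL ha)
  exact hu ▸ huE u a (List.prefix_refl _) ha

section Concatenation
variable {A : Set α} {L : Set (List α)}

theorem subset_initL (L : Set (List α)) : L ⊆ InitL L :=
  fun w hw => ⟨[], by simpa using hw⟩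

theorem isPrefixClosed_initL (L : Set (List α)) : IsPrefixClosed (InitL L) := by
  rintro u ⟨v, w, hw⟩
  exact ⟨v ++ w, by simpa using hw⟩

theorem subset_conc_ucStar : L ⊆ conc L (ucStar A) :=
  fun u hu => ⟨u, hu, [], by simp [ucStar], by simp⟩

theorem IsPrefixClosed.conc_ucStar (hL : IsPrefixClosed L) :
    IsPrefixClosed (conc L (ucStar A)) := by
  rintro u ⟨v, s, hs, m, hm, huv⟩
  rcases List.append_eq_append_iff.mp huv with ⟨a', rfl, -⟩ | ⟨c, rfl, rfl⟩
  · exact subset_conc_ucStar (hL ⟨a', hs⟩)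
  · exact ⟨s, hs, c, fun b hb => hm b (List.mem_append_left _ hb), rfl⟩

theorem append_singleton_mem_conc_ucStar {u : List α} {a : α} (hu : u ∈ conc L (ucStar A))
    (ha : a ∈ A) : u ++ [a] ∈ conc L (ucStar A) := by
  obtain ⟨s, hs, m, hm, rfl⟩ := hu
  refine ⟨s, hs, m ++ [a], fun b hb => ?_, by simp⟩
  rcases List.mem_append.mp hb with hb | hb
  · exact hm b hb
  · exact List.mem_singleton.mp hb ▸ ha

theorem mem_of_append_singleton_mem_conc_ucStar {u : List α} {a : α}
    (hu : u ++ [a] ∈ conc L (ucStar A)) (ha : a ∉ A) : u ++ [a] ∈ L := by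
  obtain ⟨s, hs, m, hm, heq⟩ := hu
  rcases List.eq_nil_or_concat m with rfl | ⟨m', b, rfl⟩
  · simpa [heq] using hs
  · rw [List.concat_eq_append, ← List.append_assoc] at heq
    obtain ⟨-, rfl⟩ := eq_of_append_singleton_eq heq
    exact absurd (hm a (by simp)) ha

end Concatenation

/-- For `Σuo ⊆ Σuc`, solvability under partial controllability and observability iff
`Real(Z) ⊆ compl(P) ∪ S` where `Z = Init(S)·Σuc*`. -/
theorem pco_solvable_iff (P S : Set (List α)) (Suc Suo : Set α)
    (hS : S.Nonempty) (hsub : Suo ⊆ Suc)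
    (hsolv : ∃ C : Set (List α), IsPrefixClosed C ∧ P ∩ C = S) :
    (∃ C : Set (List α), IsPrefixClosed C ∧ P ∩ C = S ∧ P ∩ ExtL (Fold Suo C) Suc = S) ↔
      RealL Suo (conc (InitL S) (ucStar Suc)) ⊆ Pᶜ ∪ S := by
  obtain ⟨s, hs⟩ := hS
  have hZ : IsPrefixClosed (conc (InitL S) (ucStar Suc)) :=
    (isPrefixClosed_initL S).conc_ucStar
  have hSZ : S ⊆ conc (InitL S) (ucStar Suc) := (subset_initL S).trans subset_conc_ucStar
  constructor
  · rintro ⟨C, hC, hPC, hPE⟩ w hw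
    have hnil : [] ∈ C := hC ⟨s, (hPC ▸ Set.inter_subset_right) hs⟩
    have hSE : S ⊆ ExtL (Fold Suo C) Suc := hPE ▸ Set.inter_subset_right
    have hwE : w ∈ ExtL (Fold Suo C) Suc := by
      refine realL_subset_extL_fold hnil (fun u a hu ha => ?_) hw
      obtain ⟨v, hv⟩ := mem_of_append_singleton_mem_conc_ucStar hu ha
      exact isPrefixClosed_extL_fold hnil ⟨v, hSE hv⟩
    by_cases hwP : w ∈ P
    · exact Or.inr (hPE ▸ ⟨hwP, hwE⟩)
    · exact Or.inl hwP
  · intro h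
    obtain ⟨C₀, -, hC₀⟩ := hsolv
    have hPR : P ∩ RealL Suo (conc (InitL S) (ucStar Suc)) = S :=
      Set.Subset.antisymm (fun w ⟨hwP, hwR⟩ => (h hwR).resolve_left (not_not.mpr hwP))
        fun t ht => ⟨(hC₀ ▸ Set.inter_subset_left) ht, subset_realL hZ (hSZ ht)⟩
    refine ⟨_, isPrefixClosed_realL, hPR, ?_⟩
    rwa [extL_fold_realL hZ (hZ ⟨s, by simpa using hSZ hs⟩)
      (fun u hu a ha => append_singleton_mem_conc_ucStar hu ha) hsub]
end
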